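/- arXiv:1404.7166 — 10 statements merged into one kernel-verified Lean document; each statement's English description precedes it below -/
import Mathlib

section
/- In CR(X,k,s), any two blocks sharing at least s-1 common points are equal. -/
/-- `CRBlock X k s m B` : `B` is a block of the generalized Cremona-Richmond
configuration `CR(X,k,s)` (with `|X| = k*s + m`): `B = {a₁ ∪ p, …, a_s ∪ p}`
for pairwise disjoint `k`-subsets `a₁,…,a_s` of `X` and an `m`-subset `p` of `X`
disjoint from all the `aᵢ`. -/
def CRBlock {α : Type*} [DecidableEq α] (X : Finset α) (k s m : ℕ)
    (B : Finset (Finset α)) : Prop :=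
  ∃ (A : Finset (Finset α)) (p : Finset α),
    p ⊆ X ∧ p.card = m ∧ A.card = s ∧
    (∀ a ∈ A, a ⊆ X ∧ a.card = k ∧ Disjoint a p) ∧
    (∀ a ∈ A, ∀ b ∈ A, a ≠ b → Disjoint a b) ∧
    B = A.image (· ∪ p)

/-- For block data, the leftover element of `A` is determined by the rest:
`X` is partitioned by the `a ∈ A` together with `p`. -/
lemma crblock_union_eq {α : Type*} [DecidableEq α] (X : Finset α) (k s m : ℕ)
    (hX : X.card = k * s + m)
    (A : Finset (Finset α)) (p : Finset α)
    (hpX : p ⊆ X) (hpm : p.card = m) (hAs : A.card = s)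
    (hA : ∀ a ∈ A, a ⊆ X ∧ a.card = k ∧ Disjoint a p)
    (hAd : ∀ a ∈ A, ∀ b ∈ A, a ≠ b → Disjoint a b) :
    A.biUnion id ∪ p = X := by
  have hsub : A.biUnion id ∪ p ⊆ X := by
    apply Finset.union_subset _ hpX
    intro x hx
    rw [Finset.mem_biUnion] at hx
    obtain ⟨a, ha, hxa⟩ := hx
    exact (hA a ha).1 hxa
  have hdisj : Disjoint (A.biUnion id) p := by
    rw [Finset.disjoint_biUnion_left]
    exact fun a ha => (hA a ha).2.2
  have hcard : (A.biUnion id ∪ p).card = k * s + m := by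
    have hb : (A.biUnion id).card = ∑ a ∈ A, (id a).card := Finset.card_biUnion hAd
    rw [Finset.card_union_of_disjoint hdisj, hb, hpm]
    have : ∑ a ∈ A, (id a).card = ∑ a ∈ A, k :=
      Finset.sum_congr rfl fun a ha => (hA a ha).2.1
    rw [this, Finset.sum_const, hAs, smul_eq_mul, mul_comm]
  exact Finset.eq_of_subset_of_card_le hsub (by rw [hX, hcard])

/-- Any two blocks of `CR(X,k,s)` sharing at least `s-1` common points are equal. -/
theorem crblock_eq_of_common {α : Type*} [DecidableEq α] (X : Finset α) (k s m : ℕ)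
    (hk : 0 < k) (hs : 3 ≤ s) (hX : X.card = k * s + m)
    (B₁ B₂ : Finset (Finset α)) (h₁ : CRBlock X k s m B₁) (h₂ : CRBlock X k s m B₂)
    (hcommon : s - 1 ≤ (B₁ ∩ B₂).card) :
    B₁ = B₂ := by
  obtain ⟨A, p, hpX, hpm, hAs, hA, hAd, rfl⟩ := h₁
  obtain ⟨A', p', hpX', hpm', hAs', hA', hAd', rfl⟩ := h₂
  -- recover `a` from `a ∪ p`
  have hsd : ∀ a ∈ A, (a ∪ p) \ p = a := fun a ha => by
    rw [Finset.union_sdiff_right, Finset.sdiff_eq_self_of_disjoint (hA a ha).2.2]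
  have hsd' : ∀ a ∈ A', (a ∪ p') \ p' = a := fun a ha => by
    rw [Finset.union_sdiff_right, Finset.sdiff_eq_self_of_disjoint (hA' a ha).2.2]
  -- intersection of two distinct points of a block is `p`
  have hint : ∀ a ∈ A, ∀ b ∈ A, a ≠ b → (a ∪ p) ∩ (b ∪ p) = p := by
    intro a ha b hb hab
    have hd := Finset.disjoint_left.mp (hAd a ha b hb hab)
    ext z
    simp only [Finset.mem_inter, Finset.mem_union]
    constructor
    · rintro ⟨hza | hzp, hzb | hzp'⟩
      · exact absurd hzb (hd hza)
      · exact hzp'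
      · exact hzp
      · exact hzp
    · intro hz; exact ⟨Or.inr hz, Or.inr hz⟩
  have hint' : ∀ a ∈ A', ∀ b ∈ A', a ≠ b → (a ∪ p') ∩ (b ∪ p') = p' := by
    intro a ha b hb hab
    have hd := Finset.disjoint_left.mp (hAd' a ha b hb hab)
    ext z
    simp only [Finset.mem_inter, Finset.mem_union]
    constructor
    · rintro ⟨hza | hzp, hzb | hzp'⟩
      · exact absurd hzb (hd hza)
      · exact hzp'
      · exact hzp
      · exact hzp
    · intro hz; exact ⟨Or.inr hz, Or.inr hz⟩
  set B₁ := A.image (· ∪ p) with hB₁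
  set B₂ := A'.image (· ∪ p') with hB₂
  -- two distinct common points
  obtain ⟨x, hx, y, hy, hxy⟩ := Finset.one_lt_card.mp (lt_of_lt_of_le (by omega) hcommon)
  obtain ⟨hx1, hx2⟩ := Finset.mem_inter.mp hx
  obtain ⟨hy1, hy2⟩ := Finset.mem_inter.mp hy
  obtain ⟨a, haA, hax⟩ := Finset.mem_image.mp hx1
  obtain ⟨b, hbA, hby⟩ := Finset.mem_image.mp hy1
  obtain ⟨a', haA', hax'⟩ := Finset.mem_image.mp hx2
  obtain ⟨b', hbA', hby'⟩ := Finset.mem_image.mp hy2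
  have hab : a ≠ b := by rintro rfl; exact hxy (hax ▸ hby ▸ rfl)
  have hab' : a' ≠ b' := by rintro rfl; exact hxy (hax' ▸ hby' ▸ rfl)
  -- p = p'
  have hpp' : p = p' := by
    have h1 : x ∩ y = p := by rw [← hax, ← hby]; exact hint a haA b hbA hab
    have h2 : x ∩ y = p' := by rw [← hax', ← hby']; exact hint' a' haA' b' hbA' hab'
    rw [← h1, h2]
  subst hpp'
  -- common points give common parts
  have hmap : ∀ z ∈ B₁ ∩ B₂, z \ p ∈ A ∩ A' := by
    intro z hz
    obtain ⟨hz1, hz2⟩ := Finset.mem_inter.mp hz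
    obtain ⟨c, hc, hcz⟩ := Finset.mem_image.mp hz1
    obtain ⟨c', hc', hcz'⟩ := Finset.mem_image.mp hz2
    rw [Finset.mem_inter]
    constructor
    · rw [← hcz]; rw [hsd c hc]; exact hc
    · rw [← hcz']; rw [hsd' c' hc']; exact hc'
  have hsubAA : (B₁ ∩ B₂).image (· \ p) ⊆ A ∩ A' := by
    intro w hw
    obtain ⟨z, hz, rfl⟩ := Finset.mem_image.mp hw
    exact hmap z hz
  have hinj : Set.InjOn (· \ p) ↑(B₁ ∩ B₂) := by
    intro z hz w hw hzw
    rw [Finset.mem_coe] at hz hw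
    dsimp only at hzw
    have hrec : ∀ u ∈ B₁ ∩ B₂, (u \ p) ∪ p = u := by
      intro u hu
      obtain ⟨c, hc, hcu⟩ := Finset.mem_image.mp (Finset.mem_inter.mp hu).1
      rw [← hcu, hsd c hc]
    rw [← hrec z hz, ← hrec w hw, hzw]
  have hAAcard : s - 1 ≤ (A ∩ A').card := by
    calc s - 1 ≤ (B₁ ∩ B₂).card := hcommon
    _ = ((B₁ ∩ B₂).image (· \ p)).card := (Finset.card_image_of_injOn hinj).symm
    _ ≤ (A ∩ A').card := Finset.card_le_card hsubAA
  -- A = A'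
  have hAA : A = A' := by
    have hCA : A ∩ A' = A := by
      apply Finset.eq_of_subset_of_card_le Finset.inter_subset_left
      by_contra hlt
      push_neg at hlt
      have hCcard : (A ∩ A').card = s - 1 := by
        have := Finset.card_le_card (show A ∩ A' ⊆ A from Finset.inter_subset_left)
        omega
      set C := A ∩ A' with hC
      have hACcard : (A \ C).card = 1 := by
        rw [Finset.card_sdiff_of_subset Finset.inter_subset_left, hAs, hCcard]; omega
      have hACcard' : (A' \ C).card = 1 := by
        rw [Finset.card_sdiff_of_subset Finset.inter_subset_right, hAs', hCcard]; omega
      obtain ⟨e, he⟩ := Finset.card_eq_one.mp hACcard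
      obtain ⟨e', he'⟩ := Finset.card_eq_one.mp hACcard'
      have heA : e ∈ A ∧ e ∉ C := by
        have : e ∈ A \ C := he ▸ Finset.mem_singleton_self e
        exact Finset.mem_sdiff.mp this
      have heA' : e' ∈ A' ∧ e' ∉ C := by
        have : e' ∈ A' \ C := he' ▸ Finset.mem_singleton_self e'
        exact Finset.mem_sdiff.mp this
      -- reconstruct A and A' as insert e C / insert e' C
      have hAins : A = insert e C := by
        ext w
        constructor
        · intro hw
          by_cases hwC : w ∈ C
          · exact Finset.mem_insert_of_mem hwC
          · have : w ∈ A \ C := Finset.mem_sdiff.mpr ⟨hw, hwC⟩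
            rw [he] at this
            exact Finset.mem_insert.mpr (Or.inl (Finset.mem_singleton.mp this))
        · intro hw
          rcases Finset.mem_insert.mp hw with rfl | hw
          · exact heA.1
          · exact Finset.inter_subset_left hw
      have hAins' : A' = insert e' C := by
        ext w
        constructor
        · intro hw
          by_cases hwC : w ∈ C
          · exact Finset.mem_insert_of_mem hwC
          · have : w ∈ A' \ C := Finset.mem_sdiff.mpr ⟨hw, hwC⟩
            rw [he'] at this
            exact Finset.mem_insert.mpr (Or.inl (Finset.mem_singleton.mp this))
        · intro hw
          rcases Finset.mem_insert.mp hw with rfl | hw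
          · exact heA'.1
          · exact Finset.inter_subset_right hw
      -- unions equal X
      have hU : A.biUnion id ∪ p = X :=
        crblock_union_eq X k s m hX A p hpX hpm hAs hA hAd
      have hU' : A'.biUnion id ∪ p = X :=
        crblock_union_eq X k s m hX A' p hpX' hpm' hAs' hA' hAd'
      -- e = X \ (C.biUnion id ∪ p), same for e'
      have hrec : ∀ (A₀ : Finset (Finset α)) (e₀ : Finset α),
          e₀ ∈ A₀ → A₀ = insert e₀ C →
          (∀ a ∈ A₀, a ⊆ X ∧ a.card = k ∧ Disjoint a p) →
          (∀ a ∈ A₀, ∀ b ∈ A₀, a ≠ b → Disjoint a b) →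
          e₀ ∉ C →
          A₀.biUnion id ∪ p = X →
          e₀ = X \ (C.biUnion id ∪ p) := by
        intro A₀ e₀ he₀ hins hA₀ hAd₀ heC hU₀
        have hCsub : C ⊆ A₀ := by rw [hins]; exact Finset.subset_insert _ _
        have hXeq : X = e₀ ∪ (C.biUnion id ∪ p) := by
          rw [← hU₀, hins, Finset.biUnion_insert, Finset.union_assoc]
          rfl
        have hdisj : Disjoint e₀ (C.biUnion id ∪ p) := by
          rw [Finset.disjoint_union_right, Finset.disjoint_biUnion_right]
          refine ⟨fun c hc => ?_, (hA₀ e₀ he₀).2.2⟩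
          exact hAd₀ e₀ he₀ c (hCsub hc) (fun h => heC (h ▸ hc))
        rw [hXeq, Finset.union_sdiff_right,
          Finset.sdiff_eq_self_of_disjoint hdisj]
      have h1 : e = X \ (C.biUnion id ∪ p) :=
        hrec A e heA.1 hAins hA hAd heA.2 hU
      have h2 : e' = X \ (C.biUnion id ∪ p) :=
        hrec A' e' heA'.1 hAins' hA' hAd' heA'.2 hU'
      have : e = e' := h1.trans h2.symm
      subst this
      exact heA.2 (Finset.mem_inter.mpr ⟨heA.1, heA'.1⟩)
    calc A = A ∩ A' := hCA.symm
    _ = A' := by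
      apply Finset.eq_of_subset_of_card_le Finset.inter_subset_right
      rw [hCA, hAs, hAs']
  rw [hB₁, hB₂, hAA]
end

section
/- Let X be a finite set with |X| = ks and let a be a k-element subset of X. The neighborhood of a in CR(X,k,s) — the structure whose points are the points lying on blocks through a other than a itself, and whose blocks are the blocks through a with a removed — is isomorphic to (indeed equal to) CR(X∖a, k, s-1). -/
/-- For `|X| = ks` and a point `a` (a `k`-subset of `X`), the neighborhood of `a` in
`CR(X,k,s)` equals `CR(X∖a, k, s-1)`: the blocks of `CR(X∖a,k,s-1)` are exactly the
blocks of `CR(X,k,s)` through `a` with `a` removed. -/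
theorem crblock_neighborhood {α : Type*} [DecidableEq α] (X : Finset α) (k s : ℕ)
    (hk : 0 < k) (hs : 0 < s) (hX : X.card = k * s)
    (a : Finset α) (haX : a ⊆ X) (hacard : a.card = k) :
    ∀ B : Finset (Finset α),
      CRBlock (X \ a) k (s - 1) 0 B ↔
        ∃ B' : Finset (Finset α), CRBlock X k s 0 B' ∧ a ∈ B' ∧ B = B'.erase a := by
  intro B
  have hane : a.Nonempty := Finset.card_pos.mp (hacard ▸ hk)
  constructor
  · rintro ⟨A, p, hpX, hp0, hAcard, hmem, hdisj, hB⟩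
    have hp : p = ∅ := Finset.card_eq_zero.mp hp0
    subst hp
    have hBA : B = A := by rw [hB]; simp [Finset.image_id']
    clear hB
    have haA : a ∉ A := by
      intro h
      have hsub : a ⊆ X \ a := (hmem a h).1
      obtain ⟨x, hx⟩ := hane
      exact (Finset.mem_sdiff.mp (hsub hx)).2 hx
    refine ⟨insert a A, ⟨insert a A, ∅, by simp, by simp, ?_, ?_, ?_, by
        simp [Finset.image_id']⟩, Finset.mem_insert_self _ _, by
      rw [Finset.erase_insert haA, hBA]⟩
    · rw [Finset.card_insert_of_notMem haA, hAcard]; omega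
    · intro b hb
      rcases Finset.mem_insert.mp hb with rfl | hb
      · exact ⟨haX, hacard, Finset.disjoint_empty_right _⟩
      · obtain ⟨h1, h2, h3⟩ := hmem b hb
        exact ⟨h1.trans Finset.sdiff_subset, h2, h3⟩
    · intro b hb c hc hbc
      have key : ∀ d ∈ A, Disjoint a d := by
        intro d hd
        have hd2 : d ⊆ X \ a := (hmem d hd).1
        rw [Finset.disjoint_right]
        intro x hx
        exact (Finset.mem_sdiff.mp (hd2 hx)).2
      rcases Finset.mem_insert.mp hb with hba | hb
      · rcases Finset.mem_insert.mp hc with hca | hc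
        · exact absurd (hba.trans hca.symm) hbc
        · rw [hba]; exact key c hc
      · rcases Finset.mem_insert.mp hc with hca | hc
        · rw [hca]; exact (key b hb).symm
        · exact hdisj b hb c hc hbc
  · rintro ⟨B', ⟨A, p, hpX, hp0, hAcard, hmem, hdisj, hB'⟩, haB', hB⟩
    have hp : p = ∅ := Finset.card_eq_zero.mp hp0
    subst hp
    have hB'A : B' = A := by rw [hB']; simp [Finset.image_id']
    rw [hB'A] at haB' hB
    refine ⟨A.erase a, ∅, by simp, by simp, ?_, ?_, ?_, by
      rw [hB]; simp [Finset.image_id']⟩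
    · rw [Finset.card_erase_of_mem haB', hAcard]
    · intro b hb
      have hbA := Finset.mem_of_mem_erase hb
      have hbne := Finset.ne_of_mem_erase hb
      obtain ⟨h1, h2, _⟩ := hmem b hbA
      exact ⟨Finset.subset_sdiff.mpr ⟨h1, hdisj b hbA a haB' hbne⟩, h2,
        Finset.disjoint_empty_right _⟩
    · intro b hb c hc hbc
      exact hdisj b (Finset.mem_of_mem_erase hb) c (Finset.mem_of_mem_erase hc) hbc
end

section
/- Let V be a vector space over a field F with basis e₁,...,e_{n-1}, and set e₀ = e₁ + ... + e_{n-1}. For a subset a ⊆ {0,1,...,n-1} with a ≠ ∅, a ≠ {0,...,n-1} and 0 ∉ a, the intersection of the span of {eᵢ : i ∈ a} with the span of {eᵢ : i ∉ a} is the one-dimensional subspace spanned by Σ_{i∈a} eᵢ. -/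
/-!
Let `t` be the set of nonzero indices outside `a`. The relation `e₀ = ∑_{i∈a} eᵢ + ∑_{i∈t} eᵢ`
gives `span {eᵢ : i ∉ a} = F ∙ ∑_{i∈a} eᵢ ⊔ span {eᵢ : i ∈ t}`. The vector `∑_{i∈a} eᵢ` lies in
`span {eᵢ : i ∈ a}`, which meets `span {eᵢ : i ∈ t}` only in `0` by linear independence, so the
modular law of the submodule lattice leaves exactly the line `F ∙ ∑_{i∈a} eᵢ`.
-/

open Finset Submodule

theorem Submodule.span_singleton_sup_eq_of_sub_mem {R M : Type*} [Ring R] [AddCommGroup M]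
    [Module R M] {p : Submodule R M} {x y : M} (h : x - y ∈ p) : R ∙ x ⊔ p = R ∙ y ⊔ p := by
  have key : ∀ {x y : M}, x - y ∈ p → R ∙ x ⊔ p ≤ R ∙ y ⊔ p := fun {x y} h ↦ by
    refine sup_le ((span_singleton_le_iff_mem _ _).2 ?_) le_sup_right
    simpa using add_mem (mem_sup_left (mem_span_singleton_self y)) (mem_sup_right h)
  exact le_antisymm (key h) (key (by rwa [← neg_mem_iff, neg_sub]))

theorem LinearIndepOn.span_image_inf_span_singleton_sup_span_image {R M ι : Type*} [Ring R]
    [AddCommGroup M] [Module R M] {v : ι → M} {s t : Set ι} (hv : LinearIndepOn R v (s ∪ t))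
    (hst : Disjoint s t) {x : M} (hx : x ∈ span R (v '' s)) :
    span R (v '' s) ⊓ (R ∙ x ⊔ span R (v '' t)) = R ∙ x := by
  have hdisj := ((linearIndepOn_union_iff hst).1 hv).2.2
  rw [inf_comm, sup_inf_assoc_of_le _ ((span_singleton_le_iff_mem _ _).2 hx),
    hdisj.symm.eq_bot, sup_bot_eq]

theorem span_image_compl_eq_of_eq_sum_erase {R M ι : Type*} [Ring R] [AddCommGroup M]
    [Module R M] [Fintype ι] [DecidableEq ι] {e : ι → M} {i₀ : ι}
    (h₀ : e i₀ = ∑ i ∈ univ.erase i₀, e i) {a : Finset ι} (ha : i₀ ∉ a) :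
    span R (e '' ↑aᶜ) = R ∙ (∑ i ∈ a, e i) ⊔ span R (e '' ↑(aᶜ.erase i₀)) := by
  have hcompl : ((aᶜ : Finset ι) : Set ι) = insert i₀ ↑(aᶜ.erase i₀) := by
    rw [← coe_insert, insert_erase (mem_compl.2 ha)]
  have hsplit : univ.erase i₀ \ a = aᶜ.erase i₀ := by
    ext i; simp only [mem_sdiff, mem_erase, mem_univ, mem_compl]; tauto
  have hsub : a ⊆ univ.erase i₀ := fun i hi ↦ mem_erase.2 ⟨ne_of_mem_of_not_mem hi ha, mem_univ i⟩
  rw [hcompl, Set.image_insert_eq, span_insert]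
  refine span_singleton_sup_eq_of_sub_mem ?_
  rw [h₀, ← sum_sdiff hsub, hsplit, add_sub_cancel_right]
  exact sum_mem fun i hi ↦ subset_span (Set.mem_image_of_mem e hi)

theorem frame_intersection_general {F V : Type*} [Field F] [AddCommGroup V] [Module F V]
    (n : ℕ) [NeZero n] (e : Fin n → V)
    (hli : LinearIndependent F (fun i : {i : Fin n // i ≠ 0} => e i.1))
    (h0 : e 0 = ∑ i ∈ Finset.univ.erase (0 : Fin n), e i)
    (a : Finset (Fin n)) (h0a : (0 : Fin n) ∉ a) :
    Submodule.span F (e '' ↑a) ⊓ Submodule.span F (e '' ↑aᶜ) =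
      Submodule.span F {∑ i ∈ a, e i} := by
  have hdisj : Disjoint (a : Set (Fin n)) ↑(aᶜ.erase 0) :=
    disjoint_coe.2 (disjoint_compl_right.mono_right (erase_subset _ _))
  have hsub : (a ∪ ↑(aᶜ.erase 0) : Set (Fin n)) ⊆ {i | i ≠ 0} := by
    rintro i (hi | hi)
    · exact ne_of_mem_of_not_mem hi h0a
    · exact ne_of_mem_erase hi
  have hli' : LinearIndepOn F e (a ∪ ↑(aᶜ.erase 0)) :=
    LinearIndepOn.mono (s := {i | i ≠ 0}) hli hsub
  rw [span_image_compl_eq_of_eq_sum_erase h0 h0a]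
  exact hli'.span_image_inf_span_singleton_sup_span_image hdisj
    (sum_mem fun i hi ↦ subset_span (Set.mem_image_of_mem e hi))

/-- Frame representation: with `e₁,…,e_{n-1}` a basis and `e₀ = Σᵢ eᵢ`, for a nonempty
proper subset `a` of `{0,…,n-1}` with `0 ∉ a`, the intersection of `span{eᵢ : i ∈ a}`
and `span{eᵢ : i ∉ a}` is the line spanned by `Σ_{i∈a} eᵢ`. -/
theorem frame_intersection {F V : Type*} [Field F] [AddCommGroup V] [Module F V]
    (n : ℕ) [NeZero n] (e : Fin n → V)
    (hli : LinearIndependent F (fun i : {i : Fin n // i ≠ 0} => e i.1))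
    (h0 : e 0 = ∑ i ∈ Finset.univ.erase (0 : Fin n), e i)
    (a : Finset (Fin n)) (hne : a.Nonempty) (ha : a ≠ Finset.univ) (h0a : (0 : Fin n) ∉ a) :
    Submodule.span F (e '' ↑a) ⊓ Submodule.span F (e '' ↑aᶜ) =
      Submodule.span F {∑ i ∈ a, e i} :=
  frame_intersection_general n e hli h0 a h0a
end

section
/- Let V be a vector space with basis e₁,...,e_{n-1} over a field F, e₀ = Σᵢ eᵢ, and X = {0,...,n-1} with |X| = ks. For pairwise disjoint k-element subsets a₁,...,a_j of X, the intersection of the subspaces span{eᵢ : i ∈ X∖a₁}, ..., span{eᵢ : i ∈ X∖a_j} has vector dimension k(s-j) + j - 1 (equivalently projective dimension k(s-j)+j-2). -/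
/-!
Write `L_m` for the `m`-th coordinate functional of the basis `(eᵢ)_{i ≠ 0}`, with `L_0 = 0`.
For `m ≠ m'` the functional `L_m - L_{m'}` kills every `e_q` with `q ∉ {m, m'}`, and choosing
in each `aₗ` a base point `σₗ` (equal to `0` whenever `0 ∈ aₗ`) one finds
`span{eᵢ : i ∉ aₗ} = ⋂_{i ∈ aₗ \ {σₗ}} ker (L_i - L_{σₗ})`. The intersection over `l` is thus the
kernel of `j (k - 1)` functionals, and these are independent because, the `aₗ` being disjoint,
`e_i` is dual to the constraint indexed by `i`. Rank–nullity gives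
`(ks - 1) - j (k - 1) = k (s - j) + j - 1`.
-/

open Module Submodule Finset Function

theorem Finset.sigma_eq_of_pairwise_disjoint {ι κ : Type*} {c : κ → Finset ι}
    (hc : Pairwise (Disjoint on c)) {p p' : Σ l, c l} (h : (p.2 : ι) = p'.2) : p = p' := by
  obtain ⟨l, x, hx⟩ := p
  obtain ⟨l', x', hx'⟩ := p'
  replace h : x = x' := h
  subst h
  obtain rfl : l = l' := by
    by_contra hl
    exact disjoint_left.1 (hc hl) hx hx'
  rfl

section Frame

variable {F V ι : Type*} [Field F] [AddCommGroup V] [Module F V] [DecidableEq ι] {i₀ : ι}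
  (b : Basis {i // i ≠ i₀} F V)

noncomputable def frameCoord (m : ι) : V →ₗ[F] F :=
  if h : m = i₀ then 0 else b.coord ⟨m, h⟩

@[simp]
theorem frameCoord_self : frameCoord b i₀ = 0 := dif_pos rfl

@[simp]
theorem frameCoord_coe (q : {i // i ≠ i₀}) : frameCoord b q = b.coord q := dif_neg q.2

variable [Fintype ι]

noncomputable def frame (i : ι) : V :=
  if h : i = i₀ then ∑ q, b q else b ⟨i, h⟩

@[simp]
theorem frame_self : frame b i₀ = ∑ q, b q := dif_pos rfl

@[simp]
theorem frame_coe (q : {i // i ≠ i₀}) : frame b q = b q := dif_neg q.2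

theorem frameCoord_frame_of_ne {m q : ι} (hq : q ≠ i₀) :
    frameCoord b m (frame b q) = if q = m then 1 else 0 := by
  by_cases hm : m = i₀
  · subst hm
    simp [hq]
  · simp [frameCoord, frame, hm, hq, Finsupp.single_apply, Subtype.ext_iff]

theorem frameCoord_frame_self {m : ι} (hm : m ≠ i₀) : frameCoord b m (frame b i₀) = 1 := by
  simp [frameCoord, hm, Finsupp.single_apply]

theorem frameCoord_frame_eq {m m' q : ι} (hm : q ≠ m) (hm' : q ≠ m') :
    frameCoord b m (frame b q) = frameCoord b m' (frame b q) := by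
  by_cases hq : q = i₀
  · subst hq
    rw [frameCoord_frame_self b hm.symm, frameCoord_frame_self b hm'.symm]
  · rw [frameCoord_frame_of_ne b hq, frameCoord_frame_of_ne b hq, if_neg hm, if_neg hm']

theorem sum_frameCoord_sub_smul_frame_add (v : V) (t : F) :
    ∑ q : {i // i ≠ i₀}, (frameCoord b q v - t) • frame b q + t • frame b i₀ = v := by
  simp only [frameCoord_coe, frame_coe, frame_self, sub_smul, sum_sub_distrib, ← smul_sum,
    sub_add_cancel, Basis.coord_apply, b.sum_repr]

theorem span_frame_compl_eq_iInf_ker {A : Finset ι} {σ : ι} (hσA : σ ∈ A)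
    (hσ : i₀ ∈ A → σ = i₀) :
    span F (frame b '' ↑Aᶜ) =
      ⨅ i : A.erase σ, LinearMap.ker (frameCoord b i - frameCoord b σ) := by
  apply le_antisymm
  · rw [span_le]
    rintro _ ⟨q, hq, rfl⟩
    replace hq : q ∉ A := by simpa using hq
    simp only [SetLike.mem_coe, mem_iInf, LinearMap.mem_ker, LinearMap.sub_apply, sub_eq_zero]
    rintro ⟨i, hi⟩
    exact frameCoord_frame_eq b (fun h => hq (h ▸ mem_of_mem_erase hi)) (fun h => hq (h ▸ hσA))
  · intro v hv
    simp only [mem_iInf, LinearMap.mem_ker, LinearMap.sub_apply, sub_eq_zero] at hv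
    have hvA : ∀ q ∈ A, frameCoord b q v = frameCoord b σ v := fun q hq => by
      by_cases h : q = σ
      · rw [h]
      · exact hv ⟨q, mem_erase.2 ⟨h, hq⟩⟩
    have smul_mem_of_notMem {q : ι} (hq : q ∉ A) (c : F) :
        c • frame b q ∈ span F (frame b '' ↑Aᶜ) :=
      smul_mem _ _ (subset_span ⟨q, by simpa using hq, rfl⟩)
    rw [← sum_frameCoord_sub_smul_frame_add b v (frameCoord b σ v)]
    refine add_mem (sum_mem fun q _ => ?_) ?_
    · by_cases hq : (q : ι) ∈ A
      · rw [hvA q hq, sub_self, zero_smul]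
        exact zero_mem _
      · exact smul_mem_of_notMem hq _
    · by_cases h₀ : i₀ ∈ A
      · simp [hσ h₀]
      · exact smul_mem_of_notMem h₀ _

section Constraints

variable {κ : Type*} (a : κ → Finset ι) (σ : κ → ι)

noncomputable def frameConstraints : V →ₗ[F] ((Σ l, a l |>.erase (σ l)) → F) :=
  LinearMap.pi fun p => frameCoord b p.2 - frameCoord b (σ p.1)

variable {a σ}

theorem ker_frameConstraints (hσA : ∀ l, σ l ∈ a l) (hσ : ∀ l, i₀ ∈ a l → σ l = i₀) :
    LinearMap.ker (frameConstraints b a σ) = ⨅ l, span F (frame b '' ↑(a l)ᶜ) := by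
  rw [frameConstraints, LinearMap.ker_pi, iInf_sigma]
  exact iInf_congr fun l => (span_frame_compl_eq_iInf_ker b (hσA l) (hσ l)).symm

theorem frameConstraints_frame [DecidableEq κ] (hdisj : Pairwise (Disjoint on a))
    (hσA : ∀ l, σ l ∈ a l) (hσ : ∀ l, i₀ ∈ a l → σ l = i₀) (p : Σ l, a l |>.erase (σ l)) :
    frameConstraints b a σ (frame b p.2) = Pi.single p 1 := by
  obtain ⟨hpσ, hpa⟩ := mem_erase.1 p.2.2
  have hp₀ : (p.2 : ι) ≠ i₀ := fun h => hpσ (h ▸ (hσ p.1 (h ▸ hpa)).symm)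
  have hσp (l) : (p.2 : ι) ≠ σ l := by
    rintro h
    obtain rfl : l = p.1 := by
      by_contra hl
      exact disjoint_left.1 (hdisj hl) (hσA l) (h ▸ hpa)
    exact hpσ h
  have hdisj' : Pairwise (Disjoint on fun l => (a l).erase (σ l)) := fun l l' hl =>
    (hdisj hl).mono (erase_subset _ _) (erase_subset _ _)
  funext p'
  simp only [frameConstraints, LinearMap.pi_apply, LinearMap.sub_apply,
    frameCoord_frame_of_ne b hp₀, if_neg (hσp p'.1), sub_zero, Pi.single_apply]
  by_cases hp : p = p'
  · subst hp
    simp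
  · rw [if_neg (hp ∘ sigma_eq_of_pairwise_disjoint hdisj'), if_neg (Ne.symm hp)]

theorem frameConstraints_surjective [Finite κ] (hdisj : Pairwise (Disjoint on a))
    (hσA : ∀ l, σ l ∈ a l) (hσ : ∀ l, i₀ ∈ a l → σ l = i₀) :
    Surjective (frameConstraints b a σ) := by
  classical
  rw [← LinearMap.range_eq_top, eq_top_iff, ← (Pi.basisFun F _).span_eq, span_le]
  rintro _ ⟨p, rfl⟩
  exact ⟨frame b p.2, by rw [Pi.basisFun_apply, frameConstraints_frame b hdisj hσA hσ]⟩

end Constraints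

theorem finrank_iInf_span_frame_compl_add_sum {κ : Type*} [Fintype κ] {a : κ → Finset ι}
    (hne : ∀ l, (a l).Nonempty) (hdisj : Pairwise (Disjoint on a)) :
    finrank F ↥(⨅ l, span F (frame b '' ↑(a l)ᶜ)) + ∑ l, ((a l).card - 1) =
      Fintype.card ι - 1 := by
  have hbase : ∀ l, ∃ σ ∈ a l, i₀ ∈ a l → σ = i₀ := fun l => by
    by_cases h : i₀ ∈ a l
    · exact ⟨i₀, h, fun _ => rfl⟩
    · exact ⟨(hne l).choose, (hne l).choose_spec, fun h' => absurd h' h⟩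
  choose σ hσA hσ using hbase
  have : FiniteDimensional F V := b.finiteDimensional_of_finite
  have hrank := (frameConstraints b a σ).finrank_range_add_finrank_ker
  rw [LinearMap.range_eq_top.2 (frameConstraints_surjective b hdisj hσA hσ), finrank_top,
    ker_frameConstraints b hσA hσ, finrank_pi, Fintype.card_sigma,
    finrank_eq_card_basis b] at hrank
  simp only [Fintype.card_coe, card_erase_of_mem (hσA _), Fintype.card_subtype_compl,
    Fintype.card_unique] at hrank
  omega

theorem exists_basis_eq_frame {e : ι → V}
    (hli : LinearIndependent F fun i : {i // i ≠ i₀} => e i) (hspan : span F (Set.range e) = ⊤)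
    (h0 : e i₀ = ∑ i ∈ univ.erase i₀, e i) :
    ∃ b : Basis {i // i ≠ i₀} F V, e = frame b := by
  replace h0 : e i₀ = ∑ q : {i // i ≠ i₀}, e q := h0.trans (sum_subtype _ (by simp) e)
  have hle : ⊤ ≤ span F (Set.range fun i : {i // i ≠ i₀} => e i) := by
    rw [← hspan, span_le]
    rintro _ ⟨m, rfl⟩
    by_cases hm : m = i₀
    · rw [hm, h0]
      exact sum_mem fun q _ => subset_span ⟨q, rfl⟩
    · exact subset_span ⟨⟨m, hm⟩, rfl⟩
  refine ⟨.mk hli hle, funext fun i => ?_⟩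
  by_cases hi : i = i₀
  · subst hi
    simp [h0]
  · simp [frame, hi]

end Frame

theorem frame_inf_dim_general {F V : Type*} [Field F] [AddCommGroup V] [Module F V]
    (k s j n : ℕ) (hn : n = k * s) [NeZero n]
    (e : Fin n → V)
    (hli : LinearIndependent F (fun i : {i : Fin n // i ≠ 0} => e i.1))
    (hspan : Submodule.span F (Set.range e) = ⊤)
    (h0 : e 0 = ∑ i ∈ Finset.univ.erase (0 : Fin n), e i)
    (hj : j ≤ s)
    (a : Fin j → Finset (Fin n))
    (hcard : ∀ i, (a i).card = k)
    (hdisj : ∀ i i', i ≠ i' → Disjoint (a i) (a i')) :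
    Module.finrank F ↥(⨅ i : Fin j, Submodule.span F (e '' ↑(a i)ᶜ)) =
      k * (s - j) + j - 1 := by
  obtain ⟨b, rfl⟩ := exists_basis_eq_frame hli hspan h0
  have hks : k * s ≠ 0 := hn ▸ NeZero.ne n
  have hk : k ≠ 0 := left_ne_zero_of_mul hks
  have key := finrank_iInf_span_frame_compl_add_sum b
    (fun l => card_pos.1 (by rw [hcard]; omega)) hdisj
  simp only [hcard, sum_const, card_univ, Fintype.card_fin, smul_eq_mul, hn] at key
  have hsplit : k * s = k * (s - j) + j * k := by
    rw [mul_comm j k, ← mul_add, Nat.sub_add_cancel hj]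
  have hjk : j * (k - 1) + j = j * k := by
    rw [Nat.mul_sub_one, Nat.sub_add_cancel (Nat.le_mul_of_pos_right j (Nat.pos_of_ne_zero hk))]
  omega

/-- With `|X| = ks` and the frame `e₀ = Σᵢ eᵢ`, for pairwise disjoint `k`-subsets
`a₁,…,a_j` of `X`, the intersection of the subspaces `span{eᵢ : i ∈ X∖aₗ}` has
vector dimension `k(s-j) + j - 1`. -/
theorem frame_inf_dim {F V : Type*} [Field F] [AddCommGroup V] [Module F V]
    (k s j n : ℕ) (hk : 0 < k) (hs : 0 < s) (hn : n = k * s) [NeZero n]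
    (e : Fin n → V)
    (hli : LinearIndependent F (fun i : {i : Fin n // i ≠ 0} => e i.1))
    (hspan : Submodule.span F (Set.range e) = ⊤)
    (h0 : e 0 = ∑ i ∈ Finset.univ.erase (0 : Fin n), e i)
    (hj : j ≤ s)
    (a : Fin j → Finset (Fin n))
    (hcard : ∀ i, (a i).card = k)
    (hdisj : ∀ i i', i ≠ i' → Disjoint (a i) (a i')) :
    Module.finrank F ↥(⨅ i : Fin j, Submodule.span F (e '' ↑(a i)ᶜ)) =
      k * (s - j) + j - 1 :=
  frame_inf_dim_general k s j n hn e hli hspan h0 hj a hcard hdisj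
end

section
/- With notation as above (|X| = ks, V with basis e₁,...,e_{ks-1}, e₀ = Σᵢeᵢ, p_a = span(Σ_{j∈a}e_j) for 0∉a and p_a = p_{X∖a}), if B = {a₁,...,a_s} is a partition of X into k-element sets and a is a k-element subset of X not belonging to B, then the point p_a does not lie in the span of {p_{a₁},...,p_{a_s}}. -/
/-- The representing vector of the projective point `p_c`: for a subset `c` of
`X = {0,…,n-1}` it is `Σ_{j∈c} e j` when `0 ∉ c`, and (using `p_c = p_{X∖c}`)
`Σ_{j∈cᶜ} e j` when `0 ∈ c`. -/
def pVec {V : Type*} [AddCommMonoid V] {n : ℕ} [NeZero n]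
    (e : Fin n → V) (c : Finset (Fin n)) : V :=
  if (0 : Fin n) ∈ c then ∑ j ∈ cᶜ, e j else ∑ j ∈ c, e j

/-!
Write `p_c = Σ_{j ∈ D c} e_j`, where `D c` is whichever of `c`, `cᶜ` avoids `0`. As the `e_j`
with `j ≠ 0` are independent, `p_c ∈ span {p_{aᵢ}}` turns into an identity of coefficient
functions `1_{D c} = Σ λᵢ 1_{D aᵢ}`. Each `1_{D aᵢ}` is constant on every block, since whether `j`
lies in `aᵢ` only depends on the block of `j`; hence `D c` is a union of blocks. If `0 ∈ c`, then
`D c = cᶜ` misses `0` and so the whole block of `0`, which therefore lies in `c`; otherwise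
`D c = c` contains the block of any of its elements. Either way `c` contains a block, and
equals it by cardinality.
-/

open Finset Submodule Function

section Blocks

variable {α ι R : Type*} [Fintype α] [DecidableEq α]

/-- The set `D c` above, for a general base point `x₀` in place of `0`. -/
def pSupport (x₀ : α) (c : Finset α) : Finset α :=
  if x₀ ∈ c then cᶜ else c

lemma mem_pSupport {x₀ j : α} {c : Finset α} : j ∈ pSupport x₀ c ↔ (j ∈ c ↔ x₀ ∉ c) := by
  unfold pSupport
  split_ifs with h <;> simp [h]

lemma self_notMem_pSupport (x₀ : α) (c : Finset α) : x₀ ∉ pSupport x₀ c := by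
  simp [mem_pSupport]

variable (R) [Semiring R]

def pCoeff (x₀ : α) (c : Finset α) : α → R :=
  fun j => if j ∈ pSupport x₀ c then 1 else 0

def blockConstant (a : ι → Finset α) : Submodule R (α → R) where
  carrier := {g | ∀ b, ∀ j ∈ a b, ∀ j' ∈ a b, g j = g j'}
  add_mem' hf hg b j hj j' hj' := by simp only [Pi.add_apply, hf b j hj j' hj', hg b j hj j' hj']
  zero_mem' _ _ _ _ _ := rfl
  smul_mem' r g hg b j hj j' hj' := by simp only [Pi.smul_apply, hg b j hj j' hj']

variable {R}

lemma pCoeff_self (x₀ : α) (c : Finset α) : pCoeff R x₀ c x₀ = 0 :=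
  if_neg (self_notMem_pSupport x₀ c)

lemma pCoeff_mem_blockConstant {a : ι → Finset α} (hdisj : Pairwise (Disjoint on a))
    (x₀ : α) (i : ι) : pCoeff R x₀ (a i) ∈ blockConstant R a := by
  intro b j hj j' hj'
  have hblock : ∀ {x}, x ∈ a b → (x ∈ a i ↔ i = b) := fun hx =>
    ⟨fun h => hdisj.eq (not_disjoint_iff.2 ⟨_, h, hx⟩), by rintro rfl; exact hx⟩
  have hmem : j ∈ pSupport x₀ (a i) ↔ j' ∈ pSupport x₀ (a i) := by
    rw [mem_pSupport, mem_pSupport, hblock hj, hblock hj']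
  simp only [pCoeff, hmem]

lemma exists_eq_of_pCoeff_mem_blockConstant [Nontrivial R] {a : ι → Finset α} {x₀ : α}
    {c : Finset α} (hcover : ∀ j, ∃ i, j ∈ a i) (hcard : ∀ i, #c ≤ #(a i)) (hc : c.Nonempty)
    (h : pCoeff R x₀ c ∈ blockConstant R a) : ∃ i, a i = c := by
  have hsat : ∀ b, ∀ j ∈ a b, ∀ j' ∈ a b, j ∈ pSupport x₀ c → j' ∈ pSupport x₀ c := by
    intro b j hj j' hj' hjc
    by_contra hj'c
    have := h b j hj j' hj'
    simp only [pCoeff, hjc, hj'c, if_true, if_false] at this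
    exact one_ne_zero this
  by_cases hx₀ : x₀ ∈ c
  · obtain ⟨i, hi⟩ := hcover x₀
    refine ⟨i, eq_of_subset_of_card_le (fun j hj => ?_) (hcard i)⟩
    by_contra hjc
    exact self_notMem_pSupport x₀ c (hsat i j hj x₀ hi (mem_pSupport.2 (by simp [hjc, hx₀])))
  · obtain ⟨j, hj⟩ := hc
    obtain ⟨i, hi⟩ := hcover j
    refine ⟨i, eq_of_subset_of_card_le (fun j' hj' => ?_) (hcard i)⟩
    simpa [mem_pSupport, hx₀] using hsat i j hi j' hj' (mem_pSupport.2 (by simp [hj, hx₀]))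

end Blocks

section LinearAlgebra

variable {R M α : Type*} [Semiring R] [AddCommMonoid M] [Module R M] [Fintype α] [DecidableEq α]

lemma eq_of_linearCombination_eq_of_linearIndependent_ne {v : α → M} {x₀ : α}
    (hv : LinearIndependent R fun i : {i // i ≠ x₀} => v i) {f g : α → R}
    (hf : f x₀ = 0) (hg : g x₀ = 0)
    (h : Fintype.linearCombination R v f = Fintype.linearCombination R v g) : f = g := by
  have hrestrict : ∀ f : α → R, f x₀ = 0 →
      Fintype.linearCombination R v f = ∑ i : {i // i ≠ x₀}, f i • v i := fun f hf => by
    rw [Fintype.linearCombination_apply, Fintype.sum_eq_add_sum_subtype_ne _ x₀, hf, zero_smul,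
      zero_add]
  have := Fintype.linearIndependent_iffₛ.1 hv (fun i => f i) (fun i => g i)
    (by rw [← hrestrict f hf, ← hrestrict g hg, h])
  funext j
  by_cases hj : j = x₀
  · rw [hj, hf, hg]
  · exact this ⟨j, hj⟩

end LinearAlgebra

section PVec

variable {R V : Type*} [Semiring R] [AddCommMonoid V] [Module R V] {n : ℕ} [NeZero n]

variable (R) in
lemma pVec_eq_linearCombination (e : Fin n → V) (c : Finset (Fin n)) :
    pVec e c = Fintype.linearCombination R e (pCoeff R 0 c) := by
  simp only [Fintype.linearCombination_apply, pCoeff, ite_smul, one_smul, zero_smul, sum_ite_mem,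
    univ_inter]
  unfold pVec pSupport
  split_ifs <;> rfl

lemma pCoeff_mem_span_of_pVec_mem_span {e : Fin n → V}
    (he : LinearIndependent R fun i : {i : Fin n // i ≠ 0} => e i) {ι : Type*}
    {a : ι → Finset (Fin n)} {c : Finset (Fin n)}
    (h : pVec e c ∈ span R (Set.range fun i => pVec e (a i))) :
    pCoeff R 0 c ∈ span R (Set.range fun i => pCoeff R 0 (a i)) := by
  simp only [pVec_eq_linearCombination R] at h
  rw [Set.range_comp' (Fintype.linearCombination R e), ← map_span] at h
  obtain ⟨g, hg, hgc⟩ := mem_map.1 h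
  have hvanish : span R (Set.range fun i => pCoeff R 0 (a i)) ≤ LinearMap.ker (LinearMap.proj 0) :=
    span_le.2 (Set.range_subset_iff.2 fun i => pCoeff_self 0 (a i))
  rwa [← eq_of_linearCombination_eq_of_linearIndependent_ne he (hvanish hg) (pCoeff_self 0 c) hgc]

end PVec

theorem point_not_in_block_span_general {F V : Type*} [Field F] [AddCommGroup V] [Module F V]
    (k s n : ℕ) (hk : 0 < k) [NeZero n]
    (e : Fin n → V)
    (hli : LinearIndependent F (fun i : {i : Fin n // i ≠ 0} => e i.1))
    (a : Fin s → Finset (Fin n))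
    (hcard : ∀ i, (a i).card = k)
    (hdisj : ∀ i j, i ≠ j → Disjoint (a i) (a j))
    (hcover : Finset.univ.biUnion a = Finset.univ)
    (c : Finset (Fin n)) (hc : c.card = k) (hnot : ∀ i, c ≠ a i) :
    pVec e c ∉ Submodule.span F (Set.range fun i : Fin s => pVec e (a i)) := by
  intro h
  have hblocks : ∀ j, ∃ i, j ∈ a i := fun j => by simpa using hcover.ge (mem_univ j)
  have hconst : pCoeff F 0 c ∈ blockConstant F a :=
    span_le.2 (Set.range_subset_iff.2 (pCoeff_mem_blockConstant hdisj 0))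
      (pCoeff_mem_span_of_pVec_mem_span hli h)
  obtain ⟨i, hi⟩ := exists_eq_of_pCoeff_mem_blockConstant hblocks
    (fun i => (hc.trans (hcard i).symm).le) (card_pos.1 (hc ▸ hk)) hconst
  exact hnot i hi.symm

/-- If `B = {a₁,…,a_s}` is a partition of `X` (`|X| = ks`) into `k`-sets and `c` is a
`k`-subset of `X` not belonging to `B`, then the point `p_c` does not lie in the span
of `{p_{a₁},…,p_{a_s}}`. -/
theorem point_not_in_block_span {F V : Type*} [Field F] [AddCommGroup V] [Module F V]
    (k s n : ℕ) (hk : 0 < k) (hs : 2 ≤ s) (hn : n = k * s) [NeZero n]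
    (e : Fin n → V)
    (hli : LinearIndependent F (fun i : {i : Fin n // i ≠ 0} => e i.1))
    (h0 : e 0 = ∑ i ∈ Finset.univ.erase (0 : Fin n), e i)
    (a : Fin s → Finset (Fin n))
    (hcard : ∀ i, (a i).card = k)
    (hdisj : ∀ i j, i ≠ j → Disjoint (a i) (a j))
    (hcover : Finset.univ.biUnion a = Finset.univ)
    (c : Finset (Fin n)) (hc : c.card = k) (hnot : ∀ i, c ≠ a i) :
    pVec e c ∉ Submodule.span F (Set.range fun i : Fin s => pVec e (a i)) :=
  point_not_in_block_span_general k s n hk e hli a hcard hdisj hcover c hc hnot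
end

section
/- Let U be a vector space over a field F with basis B = {e₁,...,e_v}, let k ≥ 2 with 2k < v, and suppose the characteristic of F does not divide k. Then the family of all sums e_{i₁} + ... + e_{i_k} over k-element subsets {i₁,...,i_k} ⊆ {1,...,v} spans U. -/
open Finset

section SubsetSums

variable {ι R M : Type*} [AddCommGroup M]

def subsetSums (f : ι → M) (k : ℕ) : Set M :=
  {u | ∃ t : Finset ι, t.card = k ∧ u = ∑ i ∈ t, f i}

lemma sum_mem_subsetSums (f : ι → M) {t : Finset ι} : ∑ i ∈ t, f i ∈ subsetSums f t.card :=
  ⟨t, rfl, rfl⟩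

variable [Fintype ι] [Ring R] [Module R M]

lemma sub_mem_span_subsetSums (f : ι → M) {m : ℕ} (hm : m + 2 ≤ Fintype.card ι) (i j : ι) :
    f i - f j ∈ Submodule.span R (subsetSums f (m + 1)) := by
  classical
  rcases eq_or_ne i j with rfl | hij
  · simp
  obtain ⟨t, hts, rfl⟩ : ∃ t ⊆ ({i, j} : Finset ι)ᶜ, t.card = m := by
    apply exists_subset_card_eq
    rw [card_compl, card_pair hij]
    omega
  -- `insert i t` and `insert j t` are `(m+1)`-sets whose sums differ by `f i - f j`
  have hi : i ∉ t := fun h => by simpa using hts h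
  have hj : j ∉ t := fun h => by simpa using hts h
  have hsub := Submodule.sub_mem _
    (Submodule.subset_span (R := R) (card_insert_of_notMem hi ▸ sum_mem_subsetSums f))
    (Submodule.subset_span (R := R) (card_insert_of_notMem hj ▸ sum_mem_subsetSums f))
  rwa [sum_insert hi, sum_insert hj, add_sub_add_right_eq_sub] at hsub

lemma nsmul_mem_span_subsetSums (f : ι → M) {k : ℕ} (hkι : k < Fintype.card ι) (i : ι) :
    k • f i ∈ Submodule.span R (subsetSums f k) := by
  obtain - | m := k
  · simp
  obtain ⟨t, -, ht⟩ := exists_subset_card_eq (s := univ) (n := m + 1) (by simpa using hkι.le)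
  have hdecomp : (m + 1) • f i = ∑ x ∈ t, f x + ∑ x ∈ t, (f i - f x) := by
    rw [sum_sub_distrib, sum_const, ht, add_sub_cancel]
  rw [hdecomp]
  exact Submodule.add_mem _ (Submodule.subset_span (ht ▸ sum_mem_subsetSums f))
    (Submodule.sum_mem _ fun x _ => sub_mem_span_subsetSums f (by omega) i x)

lemma span_subsetSums_eq (f : ι → M) {k : ℕ} (hkι : k < Fintype.card ι) (hk : IsUnit (k : R)) :
    Submodule.span R (subsetSums f k) = Submodule.span R (Set.range f) := by
  refine le_antisymm (Submodule.span_le.mpr ?_) (Submodule.span_le.mpr ?_)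
  · rintro - ⟨t, -, rfl⟩
    exact Submodule.sum_mem _ fun i _ => Submodule.subset_span ⟨i, rfl⟩
  · rintro - ⟨i, rfl⟩
    rw [SetLike.mem_coe, ← Submodule.smul_mem_iff_of_isUnit _ hk, Nat.cast_smul_eq_nsmul]
    exact nsmul_mem_span_subsetSums f hkι i

end SubsetSums

theorem sums_span_general {F U : Type*} [Field F] [AddCommGroup U] [Module F U]
    (v k : ℕ) (b : Module.Basis (Fin v) F U)
    (hv : 2 * k < v) (hchar : (k : F) ≠ 0) :
    Submodule.span F
        {u : U | ∃ t : Finset (Fin v), t.card = k ∧ u = ∑ i ∈ t, b i} = ⊤ := by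
  have hkv : k < Fintype.card (Fin v) := by rw [Fintype.card_fin]; omega
  exact (span_subsetSums_eq b hkv hchar.isUnit).trans b.span_eq

/-- If `e₁,…,e_v` is a basis of `U`, `k ≥ 2`, `2k < v`, and `char F ∤ k`, then the sums
`e_{i₁} + ⋯ + e_{i_k}` over all `k`-element index sets span `U`. -/
theorem sums_span {F U : Type*} [Field F] [AddCommGroup U] [Module F U]
    (v k : ℕ) (b : Module.Basis (Fin v) F U)
    (hk : 2 ≤ k) (hv : 2 * k < v) (hchar : (k : F) ≠ 0) :
    Submodule.span F
        {u : U | ∃ t : Finset (Fin v), t.card = k ∧ u = ∑ i ∈ t, b i} = ⊤ :=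
  sums_span_general v k b hv hchar
end

section
/- Let F be a field whose characteristic does not divide k, and let V, e₀,...,e_{n-1}, p be as in the frame representation with n = |X| > 2k and A a proper subset of X with |A| > 2k. Then the subspace of V spanned by {p_a : a ∈ Sub_k(A)} (the points associated to k-element subsets of A) equals the subspace spanned by {p_{{x}} : x ∈ A} = span{e_x : x ∈ A} (taking e₀ = Σᵢ₌₁^{n-1} eᵢ). -/
/-!
Let `S` be the span of the `p_a` and `B = A ∖ {0}`; for `a ⊆ B` the vector `p_a` is the plain
sum `Σ_{j∈a} e j`. Two `k`-subsets `t ∪ {x}`, `t ∪ {y}` of `B` give `e x - e y ∈ S`, and then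
for any `k`-subset `a` of `B`, `k • e x = p_a - Σ_{j∈a} (e j - e x) ∈ S`; dividing by `k` puts
every `e x` with `x ∈ B` into `S`. Because `e 0 = Σ_{i≠0} e i`, a subset `a ∋ 0` has
`p_a = e 0 - Σ_{j∈a∖{0}} e j`, which gives `e 0 ∈ S` and shows that every `p_a` with `a ⊆ A`
lies in the span of `e '' A`.
-/

open Finset

section SubsetSums

variable {ι R V : Type*} [DecidableEq ι] [AddCommGroup V]

theorem Submodule.sub_mem_of_forall_sum_mem [Ring R] [Module R V] {S : Submodule R V}
    {f : ι → V} {B : Finset ι} {k : ℕ} (hk : 0 < k) (hB : k < #B)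
    (hS : ∀ a ⊆ B, #a = k → ∑ j ∈ a, f j ∈ S) {x y : ι} (hx : x ∈ B) (hy : y ∈ B) :
    f x - f y ∈ S := by
  rcases eq_or_ne x y with rfl | hxy
  · simp
  have hcard : k - 1 ≤ #((B.erase x).erase y) := by
    rw [card_erase_of_mem (mem_erase.2 ⟨hxy.symm, hy⟩), card_erase_of_mem hx]
    omega
  obtain ⟨t, ht, htcard⟩ := exists_subset_card_eq hcard
  have htB : t ⊆ B := ht.trans ((erase_subset _ _).trans (erase_subset _ _))
  have hxt : x ∉ t := fun h => (mem_erase.1 (mem_of_mem_erase (ht h))).1 rfl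
  have hyt : y ∉ t := fun h => (mem_erase.1 (ht h)).1 rfl
  have hins : ∀ z ∈ B, z ∉ t → ∑ j ∈ insert z t, f j ∈ S := fun z hz hzt =>
    hS _ (insert_subset hz htB) (by rw [card_insert_of_notMem hzt]; omega)
  have hdiff : f x - f y = ∑ j ∈ insert x t, f j - ∑ j ∈ insert y t, f j := by
    rw [sum_insert hxt, sum_insert hyt]
    abel
  rw [hdiff]
  exact S.sub_mem (hins x hx hxt) (hins y hy hyt)

theorem Submodule.apply_mem_of_forall_sum_mem [DivisionRing R] [Module R V]
    {S : Submodule R V} {f : ι → V} {B : Finset ι} {k : ℕ} (hk : (k : R) ≠ 0) (hB : k < #B)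
    (hS : ∀ a ⊆ B, #a = k → ∑ j ∈ a, f j ∈ S) {x : ι} (hx : x ∈ B) : f x ∈ S := by
  have hk0 : 0 < k := Nat.pos_of_ne_zero (by rintro rfl; exact hk Nat.cast_zero)
  obtain ⟨a, haB, hacard⟩ := exists_subset_card_eq hB.le
  have hdiffs : ∑ j ∈ a, (f j - f x) ∈ S :=
    S.sum_mem fun j hj => S.sub_mem_of_forall_sum_mem hk0 hB hS (haB hj) hx
  have hkx : (k : R) • f x = ∑ j ∈ a, f j - ∑ j ∈ a, (f j - f x) := by
    rw [sum_sub_distrib, sum_const, hacard, sub_sub_cancel, Nat.cast_smul_eq_nsmul]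
  have hmem : (k : R) • f x ∈ S := hkx ▸ S.sub_mem (hS a haB hacard) hdiffs
  simpa only [inv_smul_smul₀ hk] using S.smul_mem (k : R)⁻¹ hmem

end SubsetSums

section PVec

variable {V : Type*} [AddCommGroup V] {n : ℕ} [NeZero n] {e : Fin n → V}

theorem pVec_of_zero_notMem {c : Finset (Fin n)} (hc : (0 : Fin n) ∉ c) :
    pVec e c = ∑ j ∈ c, e j :=
  if_neg hc

theorem pVec_of_zero_mem (h0 : e 0 = ∑ i ∈ univ.erase (0 : Fin n), e i)
    {c : Finset (Fin n)} (hc : (0 : Fin n) ∈ c) :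
    pVec e c = e 0 - ∑ j ∈ c.erase 0, e j := by
  have htotal : ∑ j ∈ cᶜ, e j + (e 0 + ∑ j ∈ c.erase 0, e j) = e 0 + e 0 := by
    rw [add_sum_erase _ _ hc, sum_compl_add_sum, ← add_sum_erase _ _ (mem_univ 0), ← h0]
  rw [pVec, if_pos hc, eq_sub_iff_add_eq]
  exact add_left_cancel (a := e 0) (by rw [← htotal]; abel)

theorem pVec_mem_span_image {F : Type*} [Field F] [Module F V]
    (h0 : e 0 = ∑ i ∈ univ.erase (0 : Fin n), e i) (c : Finset (Fin n)) :
    pVec e c ∈ Submodule.span F (e '' ↑c) := by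
  have he : ∀ j ∈ c, e j ∈ Submodule.span F (e '' ↑c) := fun j hj =>
    Submodule.subset_span ⟨j, hj, rfl⟩
  by_cases hc : (0 : Fin n) ∈ c
  · rw [pVec_of_zero_mem h0 hc]
    exact Submodule.sub_mem _ (he 0 hc) (Submodule.sum_mem _ fun j hj => he j (mem_of_mem_erase hj))
  · rw [pVec_of_zero_notMem hc]
    exact Submodule.sum_mem _ he

end PVec

theorem span_k_subsets_eq_general {F V : Type*} [Field F] [AddCommGroup V] [Module F V]
    (n k : ℕ) [NeZero n] (e : Fin n → V)
    (h0 : e 0 = ∑ i ∈ Finset.univ.erase (0 : Fin n), e i)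
    (hchar : (k : F) ≠ 0)
    (A : Finset (Fin n)) (hAcard : 2 * k < A.card) :
    Submodule.span F
        {v : V | ∃ a : Finset (Fin n), a ⊆ A ∧ a.card = k ∧ v = pVec e a} =
      Submodule.span F (e '' ↑A) := by
  set S := Submodule.span F
      {v : V | ∃ a : Finset (Fin n), a ⊆ A ∧ a.card = k ∧ v = pVec e a}
  have hpS : ∀ a ⊆ A, #a = k → pVec e a ∈ S := fun a ha hak =>
    Submodule.subset_span ⟨a, ha, hak, rfl⟩
  have hk0 : 0 < k := Nat.pos_of_ne_zero (by rintro rfl; exact hchar Nat.cast_zero)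
  have hB : k < #(A.erase 0) := by
    have := pred_card_le_card_erase (a := (0 : Fin n)) (s := A)
    omega
  set B := A.erase 0
  have hBA : B ⊆ A := erase_subset _ _
  have hmemB : ∀ x ∈ B, e x ∈ S := fun x hx =>
    S.apply_mem_of_forall_sum_mem hchar hB (fun a ha hak => by
      rw [← pVec_of_zero_notMem fun h => notMem_erase 0 A (ha h)]
      exact hpS a (ha.trans hBA) hak) hx
  have hmem0 (hA0 : (0 : Fin n) ∈ A) : e 0 ∈ S := by
    obtain ⟨t, htB, htcard⟩ := exists_subset_card_eq (show k - 1 ≤ #B by omega)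
    have h0t : (0 : Fin n) ∉ t := fun h => notMem_erase 0 A (htB h)
    have hp := pVec_of_zero_mem h0 (mem_insert_self (0 : Fin n) t)
    rw [erase_insert h0t, eq_sub_iff_add_eq'] at hp
    rw [← hp]
    refine S.add_mem (Submodule.sum_mem _ fun j hj => hmemB j (htB hj)) (hpS _ ?_ ?_)
    · exact insert_subset hA0 (htB.trans hBA)
    · rw [card_insert_of_notMem h0t, htcard]
      omega
  apply le_antisymm <;> rw [Submodule.span_le]
  · rintro _ ⟨a, haA, -, rfl⟩
    exact Submodule.span_mono (Set.image_mono (coe_subset.2 haA)) (pVec_mem_span_image h0 a)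
  · rintro _ ⟨x, hx, rfl⟩
    by_cases hx0 : x = 0
    · subst hx0; exact hmem0 hx
    · exact hmemB x (mem_erase.2 ⟨hx0, hx⟩)

/-- If `char F ∤ k`, `k > 1`, and `A` is a proper subset of `X` with `|A| > 2k`, then the
span of the points `p_a` for `k`-element subsets `a ⊆ A` equals the span of
`{e_x : x ∈ A}`. -/
theorem span_k_subsets_eq {F V : Type*} [Field F] [AddCommGroup V] [Module F V]
    (n k : ℕ) [NeZero n] (e : Fin n → V)
    (hli : LinearIndependent F (fun i : {i : Fin n // i ≠ 0} => e i.1))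
    (h0 : e 0 = ∑ i ∈ Finset.univ.erase (0 : Fin n), e i)
    (hk : 1 < k) (hchar : (k : F) ≠ 0)
    (A : Finset (Fin n)) (hA : A ⊂ Finset.univ) (hAcard : 2 * k < A.card) :
    Submodule.span F
        {v : V | ∃ a : Finset (Fin n), a ⊆ A ∧ a.card = k ∧ v = pVec e a} =
      Submodule.span F (e '' ↑A) :=
  span_k_subsets_eq_general n k e h0 hchar A hAcard
end

section
/- Let |X| = n = ks + m with m > 0, V a vector space over F with basis e₁,...,e_{n-1}, e₀ = Σeᵢ, and p the frame representation p_a = span(Σ_{j∈a} e_j) (0∉a), p_a = p_{X∖a}. Let B = {a₁∪d,...,a_s∪d} be a block of CR(X,k,s) with a₁,...,a_s pairwise disjoint k-sets, d an m-set disjoint from all aᵢ. If char F does not divide s-1, then the s vectors representing p_{a₁∪d},...,p_{a_s∪d} are linearly independent, so the points span a projective subspace of dimension s-1 (not s-2). -/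
open Finset Function

section LinearAlgebra

variable {R V ι κ : Type*} [Ring R] [AddCommGroup V] [Module R V]

theorem LinearIndepOn.linearIndependent_finset_sum [Fintype κ] {v : ι → V} {S : Set ι}
    (hv : LinearIndepOn R v S) {A : κ → Finset ι} (hAS : ∀ j, ↑(A j) ⊆ S)
    (hA : Pairwise (Disjoint on A)) (hne : ∀ j, (A j).Nonempty) :
    LinearIndependent R fun j => ∑ t ∈ A j, v t := by
  classical
  rw [Fintype.linearIndependent_iff]
  intro c hc j
  let g : ι → R := fun t => ∑ j', if t ∈ A j' then c j' else 0
  have hg : ∀ j', ∀ t ∈ A j', g t = c j' := fun j' t ht => by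
    simp only [g]
    rw [Finset.sum_eq_single j' (fun b _ hb => if_neg fun htb => disjoint_left.mp (hA hb) htb ht)
      (fun h => absurd (mem_univ j') h), if_pos ht]
  have hsum : ∑ t ∈ univ.biUnion A, g t • v t = 0 := by
    rw [sum_biUnion fun x _ y _ hxy => hA hxy, ← hc]
    refine sum_congr rfl fun j' _ => ?_
    rw [smul_sum]
    exact sum_congr rfl fun t ht => by rw [hg j' t ht]
  obtain ⟨t, ht⟩ := hne j
  rw [← hg j t ht]
  exact linearIndepOn_iff'.mp hv _ g (by simpa using hAS) hsum t
    (mem_biUnion.mpr ⟨j, mem_univ j, ht⟩)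

theorem LinearIndependent.sum_sub_self [NoZeroDivisors R] [Fintype ι] {w : ι → V}
    (hw : LinearIndependent R w) (hcard : (Fintype.card ι : R) ≠ 1) :
    LinearIndependent R fun i => ∑ j, w j - w i := by
  rw [Fintype.linearIndependent_iff]
  intro c hc i
  set C := ∑ j, c j
  have hcC : ∀ j, c j = C := by
    have : ∑ j, (C - c j) • w j = 0 := by
      rw [← hc]
      simp only [sub_smul, smul_sub, sum_sub_distrib, ← smul_sum, ← sum_smul, C]
    exact fun j => (sub_eq_zero.mp (Fintype.linearIndependent_iff.mp hw _ this j)).symm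
  have hC : ((Fintype.card ι : R) - 1) * C = 0 := by
    have : C = Fintype.card ι * C := by
      conv_lhs => rw [show C = ∑ j, c j from rfl, sum_congr rfl fun j _ => hcC j]
      rw [sum_const, card_univ, nsmul_eq_mul]
    rw [sub_mul, one_mul, ← this, sub_self]
  rw [hcC i]
  exact (mul_eq_zero.mp hC).resolve_left (sub_ne_zero.mpr hcard)

end LinearAlgebra

theorem Finset.compl_union_eq_biUnion_erase {α ι : Type*} [Fintype α] [DecidableEq α]
    [Fintype ι] [DecidableEq ι] {a : ι → Finset α} {d : Finset α} {k : ℕ}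
    (hcard : ∀ i, (a i).card = k) (hdd : ∀ i, Disjoint (a i) d) (hdisj : Pairwise (Disjoint on a))
    (htot : Fintype.card α = k * Fintype.card ι + d.card) (i : ι) :
    (a i ∪ d)ᶜ = (univ.erase i).biUnion a := by
  refine (eq_of_subset_of_card_le (fun t ht => ?_) ?_).symm
  · obtain ⟨j, hj, htj⟩ := mem_biUnion.mp ht
    simp only [mem_compl, mem_union, not_or]
    exact ⟨disjoint_left.mp (hdisj (ne_of_mem_erase hj)) htj, disjoint_left.mp (hdd j) htj⟩
  · rw [card_compl, card_union_of_disjoint (hdd i), hcard,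
      card_biUnion fun x _ y _ hxy => hdisj hxy, sum_const_nat fun j _ => hcard j,
      card_erase_of_mem (mem_univ i), card_univ, htot, Nat.sub_one_mul, Nat.mul_comm]
    omega

theorem pVec_union_eq_sum_sub {V ι : Type*} [AddCommGroup V] [Fintype ι] [DecidableEq ι]
    {n k : ℕ} [NeZero n] (e : Fin n → V) {a : ι → Finset (Fin n)} {d : Finset (Fin n)}
    (h0d : (0 : Fin n) ∈ d) (hcard : ∀ i, (a i).card = k) (hdd : ∀ i, Disjoint (a i) d)
    (hdisj : Pairwise (Disjoint on a)) (hn : n = k * Fintype.card ι + d.card) (i : ι) :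
    pVec e (a i ∪ d) = ∑ j, ∑ t ∈ a j, e t - ∑ t ∈ a i, e t := by
  rw [pVec, if_pos (mem_union_right _ h0d),
    compl_union_eq_biUnion_erase hcard hdd hdisj (by rwa [Fintype.card_fin]),
    sum_biUnion fun x _ y _ hxy => hdisj hxy, sum_erase_eq_sub (mem_univ i)]

theorem block_independent_of_char_not_dvd_general {F V : Type*} [Field F] [AddCommGroup V]
    [Module F V] (k s m n : ℕ) (hk : 0 < k) (hn : n = k * s + m) [NeZero n]
    (e : Fin n → V)
    (hli : LinearIndependent F (fun i : {i : Fin n // i ≠ 0} => e i.1))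
    (a : Fin s → Finset (Fin n)) (d : Finset (Fin n))
    (hd : d.card = m) (h0d : (0 : Fin n) ∈ d)
    (hcard : ∀ i, (a i).card = k)
    (hdd : ∀ i, Disjoint (a i) d)
    (hdisj : ∀ i j, i ≠ j → Disjoint (a i) (a j))
    (hchar : ((s - 1 : ℕ) : F) ≠ 0) :
    LinearIndependent F (fun i : Fin s => pVec e (a i ∪ d)) ∧
      Module.finrank F
          ↥(Submodule.span F (Set.range fun i : Fin s => pVec e (a i ∪ d))) = s := by
  have hs : (Fintype.card (Fin s) : F) ≠ 1 := by
    rcases s with _ | s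
    · simp at hchar
    · simpa [sub_eq_zero] using hchar
  have hblocks : LinearIndependent F fun j => ∑ t ∈ a j, e t :=
    LinearIndepOn.linearIndependent_finset_sum (S := {i | i ≠ 0}) hli
      (fun j t ht h0 => disjoint_left.mp (hdd j) ht (h0 ▸ h0d)) hdisj
      (fun j => card_pos.mp (hcard j ▸ hk))
  have hpts : LinearIndependent F fun i => pVec e (a i ∪ d) := by
    simpa only [pVec_union_eq_sum_sub e h0d hcard hdd hdisj (by rw [Fintype.card_fin, hd, hn])]
      using hblocks.sum_sub_self hs
  exact ⟨hpts, by rw [finrank_span_eq_card hpts, Fintype.card_fin]⟩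

/-- Let `|X| = n = ks + m` with `m > 0`, and let `B = {a₁∪d,…,a_s∪d}` be a block of
`CR(X,k,s)` with `0 ∈ d`. If `char F ∤ (s-1)`, then the representing vectors of the
points `p_{a₁∪d},…,p_{a_s∪d}` are linearly independent, so these points span a
projective subspace of dimension `s-1` (vector dimension `s`), not `s-2`. -/
theorem block_independent_of_char_not_dvd {F V : Type*} [Field F] [AddCommGroup V]
    [Module F V] (k s m n : ℕ) (hk : 0 < k) (hm : 0 < m) (hn : n = k * s + m) [NeZero n]
    (e : Fin n → V)
    (hli : LinearIndependent F (fun i : {i : Fin n // i ≠ 0} => e i.1))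
    (h0 : e 0 = ∑ i ∈ Finset.univ.erase (0 : Fin n), e i)
    (a : Fin s → Finset (Fin n)) (d : Finset (Fin n))
    (hd : d.card = m) (h0d : (0 : Fin n) ∈ d)
    (hcard : ∀ i, (a i).card = k)
    (hdd : ∀ i, Disjoint (a i) d)
    (hdisj : ∀ i j, i ≠ j → Disjoint (a i) (a j))
    (hchar : ((s - 1 : ℕ) : F) ≠ 0) :
    LinearIndependent F (fun i : Fin s => pVec e (a i ∪ d)) ∧
      Module.finrank F
          ↥(Submodule.span F (Set.range fun i : Fin s => pVec e (a i ∪ d))) = s :=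
  block_independent_of_char_not_dvd_general k s m n hk hn e hli a d hd h0d hcard hdd hdisj hchar
end

section
/- With the same setup (|X| = n = ks + m, m > 0), if the characteristic of F divides s-1, then for each block B = {a₁∪d,...,a_s∪d} of CR(X,k,s) the representing vectors of the s points p_{a₁∪d},...,p_{a_s∪d} are linearly dependent, while every proper subfamily of them is linearly independent; hence the points span a projective subspace of dimension exactly s-2. -/
/-!
Put `w j = ∑ x ∈ a j, e x`. The blocks `a j` are disjoint, nonempty and avoid `0`, so the `w j`
are linearly independent, and counting shows that the `a j` together with `d` partition `X`.
Hence `p_{a_i ∪ d}` is represented by `∑ j ≠ i, w j = W - w i` with `W = ∑ j, w j`.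
These `s` vectors sum to `(s - 1) • W = 0`. Conversely, a relation `∑ i ∈ t, g i • (W - w i) = 0`
with some `j₀ ∉ t` has coefficient `∑ i ∈ t, g i` at `w j₀`, which must vanish, and then the
coefficient `-g i` at each `w i` vanishes too.
-/

open Finset Function

section SumErase

variable {ι R V : Type*} [Fintype ι] [DecidableEq ι]

theorem sum_sum_erase_eq_nsmul [AddCommMonoid V] (w : ι → V) :
    ∑ i, ∑ j ∈ univ.erase i, w j = (Fintype.card ι - 1) • ∑ j, w j := by
  rw [sum_comm' (s' := fun j => univ.erase j) (t' := univ) (by simp [ne_comm]), smul_sum]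
  simp [card_erase_of_mem]

theorem sum_smul_sum_erase [Semiring R] [AddCommMonoid V] [Module R V] (g : ι → R) (w : ι → V)
    (u : Finset ι) :
    ∑ i ∈ u, g i • ∑ j ∈ univ.erase i, w j = ∑ j, (∑ i ∈ u.erase j, g i) • w j := by
  simp only [smul_sum, sum_smul]
  exact sum_comm' (by simp [ne_comm, and_comm])

variable [AddCommGroup V] {w : ι → V}

theorem not_linearIndependent_sum_erase [Ring R] [Nontrivial R] [Module R V] [Nonempty ι]
    (h : ((Fintype.card ι - 1 : ℕ) : R) = 0) :
    ¬ LinearIndependent R fun i => ∑ j ∈ univ.erase i, w j := by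
  intro hli
  have hsum : ∑ i, (1 : R) • ∑ j ∈ univ.erase i, w j = 0 := by
    simp only [one_smul]
    rw [sum_sum_erase_eq_nsmul, ← Nat.cast_smul_eq_nsmul R, h, zero_smul]
  exact one_ne_zero (Fintype.linearIndependent_iff.mp hli _ hsum (Classical.arbitrary ι))

theorem LinearIndependent.linearIndepOn_sum_erase [Ring R] [Module R V]
    (hw : LinearIndependent R w) {t : Finset ι} (ht : t ≠ univ) :
    LinearIndepOn R (fun i => ∑ j ∈ univ.erase i, w j) t := by
  obtain ⟨j₀, hj₀⟩ := not_forall.mp (mt eq_univ_iff_forall.mpr ht)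
  rw [linearIndepOn_iff']
  intro u g hut hg
  rw [sum_smul_sum_erase] at hg
  have hcoeff := Fintype.linearIndependent_iff.mp hw _ hg
  have hsum : ∑ i ∈ u, g i = 0 := by
    simpa [erase_eq_of_notMem fun h => hj₀ (hut h)] using hcoeff j₀
  intro i hi
  simpa [sum_erase_eq_sub hi, hsum] using hcoeff i

theorem LinearIndependent.finrank_span_sum_erase [DivisionRing R] [Module R V] [Nonempty ι]
    (hw : LinearIndependent R w) (h : ((Fintype.card ι - 1 : ℕ) : R) = 0) :
    Module.finrank R (Submodule.span R (Set.range fun i => ∑ j ∈ univ.erase i, w j)) =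
      Fintype.card ι - 1 := by
  have hlt := not_linearIndependent_sum_erase (w := w) h
  rw [linearIndependent_iff_card_le_finrank_span, not_le] at hlt
  obtain ⟨i₀⟩ := ‹Nonempty ι›
  set t : Finset ι := univ.erase i₀
  have hsub := (hw.linearIndepOn_sum_erase (t := t) (by simp [t])).linearIndependent
  have := FiniteDimensional.span_of_finite R (Set.finite_range fun i => ∑ j ∈ univ.erase i, w j)
  have hge : Fintype.card t ≤ Module.finrank R
      (Submodule.span R (Set.range fun i => ∑ j ∈ univ.erase i, w j)) :=
    (finrank_span_eq_card hsub).symm.trans_le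
      (Submodule.finrank_mono (Submodule.span_mono (Set.range_subset_iff.mpr fun i =>
        Set.mem_range_self _)))
  simp only [Fintype.card_coe, t, card_erase_of_mem (mem_univ i₀), card_univ] at hge
  unfold Set.finrank at hlt
  omega

end SumErase

theorem LinearIndepOn.linearIndependent_sum_blocks {ι κ R V : Type*} [Fintype ι] [Ring R]
    [AddCommGroup V] [Module R V] {v : κ → V} {s : Set κ} (hv : LinearIndepOn R v s)
    {a : ι → Finset κ} (has : ∀ i, ↑(a i) ⊆ s) (hdisj : Pairwise (Disjoint on a))
    (hne : ∀ i, (a i).Nonempty) :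
    LinearIndependent R fun i => ∑ x ∈ a i, v x := by
  let f : (Σ i, a i) → s := fun p => ⟨p.2, has p.1 p.2.2⟩
  have hf : Injective f := by
    rintro ⟨i, x, hx⟩ ⟨j, y, hy⟩ hxy
    obtain rfl : x = y := congrArg Subtype.val hxy
    obtain rfl : i = j := by
      by_contra hij
      exact disjoint_left.mp (hdisj hij) hx hy
    rfl
  have hsigma := Fintype.linearIndependent_iff.mp (hv.comp f hf)
  rw [Fintype.linearIndependent_iff]
  intro c hc i
  obtain ⟨x, hx⟩ := hne i
  refine hsigma (fun p => c p.1) ?_ ⟨i, x, hx⟩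
  rw [Fintype.sum_sigma]
  simpa only [comp_apply, f, sum_coe_sort, ← smul_sum] using hc

section Partition

variable {ι α : Type*} [Fintype ι] [Fintype α] [DecidableEq α] {a : ι → Finset α}
  {d : Finset α}

theorem biUnion_union_eq_univ_of_card (hdisj : Pairwise (Disjoint on a))
    (hdd : ∀ i, Disjoint (a i) d) {k : ℕ} (hcard : ∀ i, (a i).card = k)
    (hα : Fintype.card α = k * Fintype.card ι + d.card) : univ.biUnion a ∪ d = univ := by
  apply eq_univ_of_card
  rw [card_union_of_disjoint ((disjoint_biUnion_left _ _ _).mpr fun i _ => hdd i),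
    card_biUnion fun i _ j _ hij => hdisj hij, hα]
  simp [hcard, mul_comm]

variable [DecidableEq ι]

theorem compl_union_eq_biUnion_erase (hcover : univ.biUnion a ∪ d = univ)
    (hdisj : Pairwise (Disjoint on a)) (hdd : ∀ i, Disjoint (a i) d) (i : ι) :
    (a i ∪ d)ᶜ = (univ.erase i).biUnion a := by
  ext x
  simp only [mem_compl, mem_union, mem_biUnion, mem_erase, mem_univ, and_true, not_or]
  constructor
  · rintro ⟨hxi, hxd⟩
    have hx : x ∈ univ.biUnion a ∪ d := hcover ▸ mem_univ x
    simp only [mem_union, mem_biUnion, mem_univ, true_and] at hx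
    obtain ⟨j, hj⟩ := hx.resolve_right hxd
    exact ⟨j, fun hji => hxi (hji ▸ hj), hj⟩
  · rintro ⟨j, hji, hj⟩
    exact ⟨disjoint_left.mp (hdisj hji) hj, disjoint_left.mp (hdd j) hj⟩

theorem pVec_union_eq_sum_erase {V : Type*} [AddCommMonoid V] {n : ℕ} [NeZero n]
    (e : Fin n → V) {a : ι → Finset (Fin n)} {d : Finset (Fin n)} (h0d : 0 ∈ d)
    (hcover : univ.biUnion a ∪ d = univ) (hdisj : Pairwise (Disjoint on a))
    (hdd : ∀ i, Disjoint (a i) d) (i : ι) :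
    pVec e (a i ∪ d) = ∑ j ∈ univ.erase i, ∑ x ∈ a j, e x := by
  rw [pVec, if_pos (mem_union_right _ h0d), compl_union_eq_biUnion_erase hcover hdisj hdd,
    sum_biUnion (hdisj.set_pairwise _)]

end Partition

theorem block_dependent_of_char_dvd_general {F V : Type*} [Field F] [AddCommGroup V]
    [Module F V] (k s m n : ℕ) (hk : 0 < k) (hs : 2 ≤ s)
    (hn : n = k * s + m) [NeZero n]
    (e : Fin n → V)
    (hli : LinearIndependent F (fun i : {i : Fin n // i ≠ 0} => e i.1))
    (a : Fin s → Finset (Fin n)) (d : Finset (Fin n))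
    (hd : d.card = m) (h0d : (0 : Fin n) ∈ d)
    (hcard : ∀ i, (a i).card = k)
    (hdd : ∀ i, Disjoint (a i) d)
    (hdisj : ∀ i j, i ≠ j → Disjoint (a i) (a j))
    (hchar : ((s - 1 : ℕ) : F) = 0) :
    ¬ LinearIndependent F (fun i : Fin s => pVec e (a i ∪ d)) ∧
      (∀ t : Finset (Fin s), t ≠ Finset.univ →
        LinearIndependent F (fun i : t => pVec e (a i ∪ d))) ∧
      Module.finrank F
          ↥(Submodule.span F (Set.range fun i : Fin s => pVec e (a i ∪ d))) = s - 1 := by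
  have hcover : univ.biUnion a ∪ d = univ :=
    biUnion_union_eq_univ_of_card hdisj hdd hcard (by simp [hn, hd])
  have hw : LinearIndependent F fun j => ∑ x ∈ a j, e x :=
    LinearIndepOn.linearIndependent_sum_blocks (s := {i | i ≠ 0}) hli
      (fun j _ hx h0 => disjoint_left.mp (hdd j) (h0 ▸ hx) h0d) hdisj
      (fun j => card_pos.mp (hcard j ▸ hk))
  have : Nonempty (Fin s) := ⟨⟨0, by omega⟩⟩
  have hchar' : ((Fintype.card (Fin s) - 1 : ℕ) : F) = 0 := by simpa using hchar
  have hp := funext (pVec_union_eq_sum_erase e h0d hcover hdisj hdd)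
  rw [hp]
  refine ⟨not_linearIndependent_sum_erase hchar', fun t ht => ?_,
    by simpa using hw.finrank_span_sum_erase hchar'⟩
  simp only [pVec_union_eq_sum_erase e h0d hcover hdisj hdd]
  exact hw.linearIndepOn_sum_erase ht

/-- Let `|X| = n = ks + m` with `m > 0`, and let `B = {a₁∪d,…,a_s∪d}` be a block of
`CR(X,k,s)` with `0 ∈ d`. If `char F ∣ (s-1)`, then the representing vectors of the
`s` points `p_{a₁∪d},…,p_{a_s∪d}` are linearly dependent, while every proper subfamily
is linearly independent; hence the points span a projective subspace of dimension
exactly `s-2` (vector dimension `s-1`). -/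
theorem block_dependent_of_char_dvd {F V : Type*} [Field F] [AddCommGroup V]
    [Module F V] (k s m n : ℕ) (hk : 0 < k) (hs : 2 ≤ s) (hm : 0 < m)
    (hn : n = k * s + m) [NeZero n]
    (e : Fin n → V)
    (hli : LinearIndependent F (fun i : {i : Fin n // i ≠ 0} => e i.1))
    (h0 : e 0 = ∑ i ∈ Finset.univ.erase (0 : Fin n), e i)
    (a : Fin s → Finset (Fin n)) (d : Finset (Fin n))
    (hd : d.card = m) (h0d : (0 : Fin n) ∈ d)
    (hcard : ∀ i, (a i).card = k)
    (hdd : ∀ i, Disjoint (a i) d)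
    (hdisj : ∀ i j, i ≠ j → Disjoint (a i) (a j))
    (hchar : ((s - 1 : ℕ) : F) = 0) :
    ¬ LinearIndependent F (fun i : Fin s => pVec e (a i ∪ d)) ∧
      (∀ t : Finset (Fin s), t ≠ Finset.univ →
        LinearIndependent F (fun i : t => pVec e (a i ∪ d))) ∧
      Module.finrank F
          ↥(Submodule.span F (Set.range fun i : Fin s => pVec e (a i ∪ d))) = s - 1 :=
  block_dependent_of_char_dvd_general k s m n hk hs hn e hli a d hd h0d hcard hdd hdisj hchar
end

section
/- In the weak chain structure M = CR(X,k,4) with |X| = 4k, if B₀, B₁, B₂ are blocks with |B₀ ∩ B₁| = 2 and |B₀ ∩ B₂| = 2, then B₁ = B₂ or B₁ ∩ B₂ ⊆ B₀. -/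
lemma crblock_elim {α : Type*} [DecidableEq α] {X : Finset α} {k : ℕ}
    {B : Finset (Finset α)} (h : CRBlock X k 4 0 B) :
    B.card = 4 ∧ (∀ a ∈ B, a ⊆ X ∧ a.card = k) ∧
    (∀ a ∈ B, ∀ b ∈ B, a ≠ b → Disjoint a b) := by
  obtain ⟨A, p, hpX, hp0, hA4, hmem, hdisj, hB⟩ := h
  have hp : p = ∅ := Finset.card_eq_zero.mp hp0
  subst hp
  have hBA : B = A := by simpa using hB
  subst hBA
  exact ⟨hA4, fun a ha => ⟨(hmem a ha).1, (hmem a ha).2.1⟩, hdisj⟩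

lemma crblock_cover {α : Type*} [DecidableEq α] {X : Finset α} {k : ℕ}
    {B : Finset (Finset α)} (hX : X.card = 4 * k) (h : CRBlock X k 4 0 B) :
    ∀ y ∈ X, ∃ a ∈ B, y ∈ a := by
  obtain ⟨hcard, hmem, hdisj⟩ := crblock_elim h
  have hU : B.biUnion id = X := by
    apply Finset.eq_of_subset_of_card_le
    · intro y hy
      obtain ⟨a, ha, hya⟩ := Finset.mem_biUnion.mp hy
      exact (hmem a ha).1 hya
    · have hbu : (B.biUnion id).card = ∑ a ∈ B, (id a).card :=
        Finset.card_biUnion (fun a ha b hb hab => hdisj a ha b hb hab)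
      rw [hbu]
      have : ∑ a ∈ B, (id a).card = ∑ _a ∈ B, k :=
        Finset.sum_congr rfl (fun a ha => (hmem a ha).2)
      rw [this, Finset.sum_const, hcard, hX, smul_eq_mul]
  intro y hy
  rw [← hU] at hy
  exact Finset.mem_biUnion.mp hy

/-- In a partition `B` of `X` with 4 parts, a part `b` avoiding a 2-subset `P` of parts
and another part `x` is exactly the complement of the parts of `P` and of `x`. -/
lemma part_eq_compl {α : Type*} [DecidableEq α] {X : Finset α} {B : Finset (Finset α)}
    (hcard : B.card = 4)
    (hsub : ∀ a ∈ B, a ⊆ X)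
    (hdisj : ∀ a ∈ B, ∀ c ∈ B, a ≠ c → Disjoint a c)
    (hcov : ∀ y ∈ X, ∃ a ∈ B, y ∈ a)
    {P : Finset (Finset α)} (hPB : P ⊆ B) (hP2 : P.card = 2)
    {x b : Finset α} (hxB : x ∈ B) (hxP : x ∉ P)
    (hbB : b ∈ B) (hbP : b ∉ P) (hbx : b ≠ x) :
    b = (X \ P.biUnion id) \ x := by
  have hins : insert x P ⊆ B := Finset.insert_subset hxB hPB
  have hins3 : (insert x P).card = 3 := by rw [Finset.card_insert_of_notMem hxP, hP2]
  have hone : (B \ insert x P).card ≤ 1 := by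
    rw [Finset.card_sdiff_of_subset hins, hcard, hins3]
  ext y
  constructor
  · intro hy
    simp only [Finset.mem_sdiff]
    refine ⟨⟨hsub b hbB hy, ?_⟩, ?_⟩
    · intro hyP
      obtain ⟨a, haP, hya⟩ := Finset.mem_biUnion.mp hyP
      have hab : a ≠ b := fun h => hbP (h ▸ haP)
      exact (Finset.disjoint_left.mp (hdisj a (hPB haP) b hbB hab)) hya hy
    · intro hyx
      exact (Finset.disjoint_left.mp (hdisj b hbB x hxB hbx)) hy hyx
  · intro hy
    simp only [Finset.mem_sdiff] at hy
    obtain ⟨⟨hyX, hyP⟩, hyx⟩ := hy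
    obtain ⟨c, hcB, hyc⟩ := hcov y hyX
    have hcP : c ∉ P := fun h => hyP (Finset.mem_biUnion.mpr ⟨c, h, hyc⟩)
    have hcx : c ≠ x := fun h => hyx (h ▸ hyc)
    have hcmem : c ∈ B \ insert x P := by
      simp [Finset.mem_sdiff, hcB, hcx, hcP]
    have hbmem : b ∈ B \ insert x P := by
      simp [Finset.mem_sdiff, hbB, hbx, hbP]
    have : c = b := Finset.card_le_one.mp hone c hcmem b hbmem
    exact this ▸ hyc

/-- In the weak chain structure `CR(X,k,4)` (`|X| = 4k`): if blocks `B₀,B₁,B₂` satisfy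
`|B₀ ∩ B₁| = 2 = |B₀ ∩ B₂|`, then `B₁ = B₂` or `B₁ ∩ B₂ ⊆ B₀`. -/
theorem crblock_chain_property {α : Type*} [DecidableEq α] (X : Finset α) (k : ℕ)
    (hk : 0 < k) (hX : X.card = 4 * k)
    (B₀ B₁ B₂ : Finset (Finset α))
    (h₀ : CRBlock X k 4 0 B₀) (h₁ : CRBlock X k 4 0 B₁) (h₂ : CRBlock X k 4 0 B₂)
    (h01 : (B₀ ∩ B₁).card = 2) (h02 : (B₀ ∩ B₂).card = 2) :
    B₁ = B₂ ∨ B₁ ∩ B₂ ⊆ B₀ := by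
  obtain ⟨hc0, hm0, hd0⟩ := crblock_elim h₀
  obtain ⟨hc1, hm1, hd1⟩ := crblock_elim h₁
  obtain ⟨hc2, hm2, hd2⟩ := crblock_elim h₂
  have cov0 := crblock_cover hX h₀
  have cov1 := crblock_cover hX h₁
  have cov2 := crblock_cover hX h₂
  by_cases hss : B₁ ∩ B₂ ⊆ B₀
  · exact Or.inr hss
  obtain ⟨x, hx12, hx0⟩ := Finset.not_subset.mp hss
  have hx1 : x ∈ B₁ := (Finset.mem_inter.mp hx12).1
  have hx2 : x ∈ B₂ := (Finset.mem_inter.mp hx12).2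
  -- every point of x lies in a part of B₀ which is neither in B₁ nor in B₂
  have key : ∀ y ∈ x, ∃ a, a ∈ B₀ ∧ a ∉ B₁ ∧ a ∉ B₂ ∧ y ∈ a := by
    intro y hy
    have hyX : y ∈ X := (hm1 x hx1).1 hy
    obtain ⟨a, ha0, hya⟩ := cov0 y hyX
    have hax : a ≠ x := fun h => hx0 (h ▸ ha0)
    refine ⟨a, ha0, ?_, ?_, hya⟩
    · intro ha1
      exact (Finset.disjoint_left.mp (hd1 a ha1 x hx1 hax)) hya hy
    · intro ha2
      exact (Finset.disjoint_left.mp (hd2 a ha2 x hx2 hax)) hya hy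
  by_cases hP : B₀ ∩ B₁ = B₀ ∩ B₂
  · -- same two shared parts: show B₁ = B₂
    left
    apply Finset.eq_of_subset_of_card_le _ (by rw [hc1, hc2])
    intro b hb
    by_cases hb0 : b ∈ B₀
    · have : b ∈ B₀ ∩ B₂ := hP ▸ Finset.mem_inter.mpr ⟨hb0, hb⟩
      exact (Finset.mem_inter.mp this).2
    by_cases hbx : b = x
    · exact hbx ▸ hx2
    -- b is the fourth part of B₁; find the fourth part b' of B₂
    have hxP1 : x ∉ B₀ ∩ B₁ := fun h => hx0 (Finset.mem_inter.mp h).1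
    have hxP2 : x ∉ B₀ ∩ B₂ := fun h => hx0 (Finset.mem_inter.mp h).1
    have hbP1 : b ∉ B₀ ∩ B₁ := fun h => hb0 (Finset.mem_inter.mp h).1
    have hbeq := part_eq_compl hc1 (fun a ha => (hm1 a ha).1) hd1 cov1
      Finset.inter_subset_right h01 hx1 hxP1 hb hbP1 hbx
    -- existence of b' ∈ B₂, b' ∉ B₀, b' ≠ x
    have hsd2 : (B₂ \ B₀).card = 2 := by
      have h1 : (B₂ \ B₀).card + (B₂ ∩ B₀).card = B₂.card :=
        Finset.card_sdiff_add_card_inter B₂ B₀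
      rw [Finset.inter_comm] at h1
      omega
    obtain ⟨b', hb'mem, hb'x⟩ :=
      Finset.exists_mem_ne (by omega : 1 < (B₂ \ B₀).card) x
    have hb'2 : b' ∈ B₂ := (Finset.mem_sdiff.mp hb'mem).1
    have hb'0 : b' ∉ B₀ := (Finset.mem_sdiff.mp hb'mem).2
    have hb'P2 : b' ∉ B₀ ∩ B₂ := fun h => hb'0 (Finset.mem_inter.mp h).1
    have hbeq' := part_eq_compl hc2 (fun a ha => (hm2 a ha).1) hd2 cov2
      Finset.inter_subset_right h02 hx2 hxP2 hb'2 hb'P2 hb'x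
    rw [hP] at hbeq
    rw [hbeq, ← hbeq']
    exact hb'2
  · -- different shared parts: x fits in at most one part of B₀, contradiction
    exfalso
    -- |B₀ \ (B₁ ∪ B₂)| ≤ 1
    have hne : ¬ (B₀ ∩ B₂ ⊆ B₀ ∩ B₁) := by
      intro h
      exact hP (Finset.eq_of_subset_of_card_le h (by rw [h01, h02])).symm
    obtain ⟨t, ht2, ht1⟩ := Finset.not_subset.mp hne
    have h3 : 3 ≤ ((B₀ ∩ B₁) ∪ (B₀ ∩ B₂)).card := by
      have hins : insert t (B₀ ∩ B₁) ⊆ (B₀ ∩ B₁) ∪ (B₀ ∩ B₂) :=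
        Finset.insert_subset (Finset.mem_union_right _ ht2)
          Finset.subset_union_left
      have := Finset.card_le_card hins
      rw [Finset.card_insert_of_notMem ht1, h01] at this
      exact this
    have hCcard : (B₀ \ (B₁ ∪ B₂)).card ≤ 1 := by
      have h1 : (B₀ \ (B₁ ∪ B₂)).card + (B₀ ∩ (B₁ ∪ B₂)).card = B₀.card :=
        Finset.card_sdiff_add_card_inter B₀ (B₁ ∪ B₂)
      rw [Finset.inter_union_distrib_left] at h1
      omega
    have hxne : x.Nonempty := Finset.card_pos.mp (by rw [(hm1 x hx1).2]; exact hk)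
    obtain ⟨y₀, hy₀⟩ := hxne
    obtain ⟨a, ha0, ha1, ha2, hy₀a⟩ := key y₀ hy₀
    have haC : a ∈ B₀ \ (B₁ ∪ B₂) := by simp [Finset.mem_sdiff, ha0, ha1, ha2]
    have hxa : x ⊆ a := by
      intro y hy
      obtain ⟨c, hc0, hc1, hc2', hyc⟩ := key y hy
      have hcC : c ∈ B₀ \ (B₁ ∪ B₂) := by simp [Finset.mem_sdiff, hc0, hc1, hc2']
      have : c = a := Finset.card_le_one.mp hCcard c hcC a haC
      exact this ▸ hyc
    have : x = a := Finset.eq_of_subset_of_card_le hxa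
      (by rw [(hm1 x hx1).2, (hm0 a ha0).2])
    exact hx0 (this ▸ ha0)
end
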